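/- Let 0 < s_min ≤ s_max. There exists a constant κ > 0, depending only on s_min and s_max, such that for every L ≥ 1, every L×L Hermitian matrix R with s_min I_L ≤ R ≤ s_max I_L, and every L×L complex matrix A, the unique solution X = D_R(A) of R X R^{1/2} + R^{1/2} X R = A satisfies ‖D_R(A)‖ ≤ κ ‖A‖, where ‖·‖ denotes the spectral norm. -/

import Mathlib

open Matrix
open scoped ComplexOrder

/-- The spectral (operator) norm of a complex square matrix. -/
noncomputable def specNorm {n : ℕ} (A : Matrix (Fin n) (Fin n) ℂ) : ℝ :=
  ‖Matrix.toEuclideanCLM (𝕜 := ℂ) A‖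

/-- The positive semidefinite square root of a positive semidefinite matrix
(the definition `Matrix.PosSemidef.sqrt` of Mathlib, December 2024, since removed). -/
noncomputable def Matrix.PosSemidef.sqrt {n 𝕜 : Type*} [Fintype n] [RCLike 𝕜] [DecidableEq n]
    {A : Matrix n n 𝕜} (hA : A.PosSemidef) : Matrix n n 𝕜 :=
  hA.1.eigenvectorUnitary.1 * diagonal ((↑) ∘ (√·) ∘ hA.1.eigenvalues) *
    (star hA.1.eigenvectorUnitary : Matrix n n 𝕜)

/-!
Write `S = R^{1/2}`, so that `R = S²` and the equation reads `S Z + Z S = A` with `Z = S X S`.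
Since `R ≥ s_min`, operator monotonicity of the square root gives `S ≥ m := √s_min`. If `u` is a
top right-singular vector of `Z` (an eigenvector of `Z* Z` for `‖Z‖²`), then
`Re ⟪A u, Z u⟫ = Re ⟪S Z u, Z u⟫ + ‖Z‖² Re ⟪S u, u⟫ ≥ 2 m ‖Z‖² ‖u‖²`, whence `2 m ‖Z‖ ≤ ‖A‖`.
Finally `S ≥ m` also gives `m² ‖X‖ ≤ ‖S X S‖`, so `κ = 1 / (2 s_min^{3/2})` works.
-/

open ContinuousLinearMap RCLike
open scoped InnerProductSpace

section Coercive

variable {𝕜 E : Type*} [RCLike 𝕜] [NormedAddCommGroup E] [InnerProductSpace 𝕜 E]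

def IsCoerciveWith (s : E →L[𝕜] E) (m : ℝ) : Prop :=
  ∀ v, m * ‖v‖ ^ 2 ≤ re ⟪s v, v⟫_𝕜

namespace IsCoerciveWith

variable {s : E →L[𝕜] E} {m : ℝ}

lemma mul_norm_le_norm_apply (hs : IsCoerciveWith s m) (v : E) : m * ‖v‖ ≤ ‖s v‖ := by
  rcases eq_or_ne v 0 with rfl | hv
  · simp
  refine le_of_mul_le_mul_right ?_ (norm_pos_iff.mpr hv)
  calc m * ‖v‖ * ‖v‖ = m * ‖v‖ ^ 2 := by ring
    _ ≤ re ⟪s v, v⟫_𝕜 := hs v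
    _ ≤ ‖s v‖ * ‖v‖ := (re_le_norm _).trans (norm_inner_le_norm _ _)

lemma surjective [CompleteSpace E] (hs : IsCoerciveWith s m) (hm : 0 < m) :
    Function.Surjective s := by
  refine (isUnit_iff_bijective.mp
    (isUnit_of_forall_le_norm_inner_map s (c := ⟨m, hm.le⟩) hm fun v ↦ ?_)).2
  rw [mul_comm]
  exact (hs v).trans (re_le_norm _)

lemma mul_norm_le_norm_mul_left (hs : IsCoerciveWith s m) (hm : 0 < m) (x : E →L[𝕜] E) :
    m * ‖x‖ ≤ ‖s * x‖ := by
  rw [← le_div_iff₀' hm]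
  refine x.opNorm_le_bound (by positivity) fun v ↦ ?_
  rw [div_mul_eq_mul_div, le_div_iff₀' hm]
  exact (hs.mul_norm_le_norm_apply (x v)).trans ((s * x).le_opNorm v)

lemma mul_norm_le_norm_mul_right [CompleteSpace E] (hs : IsCoerciveWith s m) (hm : 0 < m)
    (x : E →L[𝕜] E) : m * ‖x‖ ≤ ‖x * s‖ := by
  rw [← le_div_iff₀' hm]
  refine x.opNorm_le_bound (by positivity) fun w ↦ ?_
  obtain ⟨v, rfl⟩ := hs.surjective hm w
  rw [div_mul_eq_mul_div, le_div_iff₀' hm]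
  calc m * ‖x (s v)‖ ≤ m * (‖x * s‖ * ‖v‖) := by gcongr; exact (x * s).le_opNorm v
    _ = ‖x * s‖ * (m * ‖v‖) := by ring
    _ ≤ ‖x * s‖ * ‖s v‖ := by gcongr; exact hs.mul_norm_le_norm_apply v

end IsCoerciveWith

end Coercive

section Lyapunov

variable {E : Type*} [NormedAddCommGroup E] [InnerProductSpace ℂ E] [FiniteDimensional ℂ E]

lemma exists_adjoint_apply_apply_eq_norm_sq_smul [Nontrivial E] (z : E →L[ℂ] E) :
    ∃ u ≠ 0, adjoint z (z u) = (‖z‖ ^ 2 : ℂ) • u := by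
  have := FiniteDimensional.complete ℂ E
  have hspec := CStarAlgebra.norm_mem_spectrum_of_nonneg (star_mul_self_nonneg z)
  rw [CStarRing.norm_star_mul_self, ← sq] at hspec
  have hspecℂ := spectrum.algebraMap_mem ℂ hspec
  rw [ContinuousLinearMap.spectrum_eq] at hspecℂ
  obtain ⟨u, hu⟩ := (Module.End.HasEigenvalue.of_mem_spectrum hspecℂ).exists_hasEigenvector
  exact ⟨u, hu.2, by simpa [star_eq_adjoint] using hu.apply_eq_smul⟩

namespace IsCoerciveWith

variable {s : E →L[ℂ] E} {m : ℝ}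

lemma two_mul_mul_norm_le_norm_mul_add_mul (hs : IsCoerciveWith s m) (z : E →L[ℂ] E) :
    2 * m * ‖z‖ ≤ ‖s * z + z * s‖ := by
  rcases (norm_nonneg z).eq_or_lt with hz | hz
  · simp [← hz]
  have : Nontrivial E := by
    by_contra h
    rw [not_nontrivial_iff_subsingleton] at h
    exact hz.ne' (by simp [Subsingleton.elim z 0])
  obtain ⟨u, hu0, hu⟩ := exists_adjoint_apply_apply_eq_norm_sq_smul z
  set a := s * z + z * s
  have hzu : ‖z u‖ ^ 2 = ‖z‖ ^ 2 * ‖u‖ ^ 2 := by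
    rw [← inner_self_eq_norm_sq (𝕜 := ℂ), ← adjoint_inner_left, hu, inner_smul_left,
      ← inner_self_eq_norm_sq (𝕜 := ℂ) u]
    simp only [re_to_complex, Complex.conj_ofReal, ← Complex.ofReal_pow, Complex.re_ofReal_mul]
  have hsplit : re ⟪a u, z u⟫_ℂ = re ⟪s (z u), z u⟫_ℂ + ‖z‖ ^ 2 * re ⟪s u, u⟫_ℂ := by
    rw [show a u = s (z u) + z (s u) from rfl, inner_add_left, ← adjoint_inner_right z, hu,
      inner_smul_right, map_add]
    simp only [re_to_complex, ← Complex.ofReal_pow, Complex.re_ofReal_mul]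
  have hlower : 2 * m * ‖z‖ ^ 2 * ‖u‖ ^ 2 ≤ re ⟪a u, z u⟫_ℂ := by
    have hzu_le := hs (z u)
    have hu_le := mul_le_mul_of_nonneg_left (hs u) (sq_nonneg ‖z‖)
    rw [hzu] at hzu_le
    rw [hsplit]
    linarith
  have hupper : re ⟪a u, z u⟫_ℂ ≤ ‖a‖ * ‖z‖ * ‖u‖ ^ 2 := by
    calc re ⟪a u, z u⟫_ℂ ≤ ‖a u‖ * ‖z u‖ := (re_le_norm _).trans (norm_inner_le_norm _ _)
      _ ≤ (‖a‖ * ‖u‖) * (‖z‖ * ‖u‖) := by gcongr <;> exact le_opNorm _ _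
      _ = ‖a‖ * ‖z‖ * ‖u‖ ^ 2 := by ring
  refine le_of_mul_le_mul_right ?_ (mul_pos hz (pow_pos (norm_pos_iff.mpr hu0) 2))
  linarith [hlower.trans hupper]

lemma two_mul_pow_three_mul_norm_le (hs : IsCoerciveWith s m) (hm : 0 < m) (x : E →L[ℂ] E) :
    2 * m ^ 3 * ‖x‖ ≤ ‖s * s * x * s + s * x * (s * s)‖ := by
  have := FiniteDimensional.complete ℂ E
  calc 2 * m ^ 3 * ‖x‖ = 2 * m * (m * (m * ‖x‖)) := by ring
    _ ≤ 2 * m * (m * ‖x * s‖) := by gcongr; exact hs.mul_norm_le_norm_mul_right hm x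
    _ ≤ 2 * m * ‖s * (x * s)‖ := by gcongr; exact hs.mul_norm_le_norm_mul_left hm _
    _ ≤ ‖s * (s * (x * s)) + s * (x * s) * s‖ := hs.two_mul_mul_norm_le_norm_mul_add_mul _
    _ = ‖s * s * x * s + s * x * (s * s)‖ := by simp only [mul_assoc]

end IsCoerciveWith

end Lyapunov

namespace Matrix

lemma isCoerciveWith_toEuclideanCLM {n 𝕜 : Type*} [Fintype n] [RCLike 𝕜] [DecidableEq n]
    {P : Matrix n n 𝕜} {c : ℝ} (h : (P - (c : 𝕜) • 1).PosSemidef) :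
    IsCoerciveWith (toEuclideanCLM (𝕜 := 𝕜) P) c := by
  intro v
  have hpos : (toEuclideanCLM (𝕜 := 𝕜) (P - (c : 𝕜) • 1)).IsPositive :=
    isPositive_toEuclideanLin_iff.mpr h
  have := hpos.re_inner_nonneg_left v
  rw [map_sub, map_smul, map_one, _root_.sub_apply, _root_.smul_apply, one_apply_eq_self,
    inner_sub_left, inner_smul_real_left, map_sub, smul_re, inner_self_eq_norm_sq] at this
  linarith

open scoped MatrixOrder Matrix.Norms.L2Operator NNReal

variable {n : Type*} [Fintype n] [DecidableEq n]

lemma algebraMap_nnreal_eq_smul_one (c : ℝ≥0) :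
    algebraMap ℝ≥0 (Matrix n n ℂ) c = ((c : ℝ) : ℂ) • 1 := by
  rw [Algebra.algebraMap_eq_smul_one]
  rfl

namespace PosSemidef

variable {𝕜 : Type*} [RCLike 𝕜]

lemma sqrt_eq_cfcSqrt {A : Matrix n n 𝕜} (hA : A.PosSemidef) : hA.sqrt = CFC.sqrt A := by
  rw [CFC.sqrt_eq_cfc, cfc_nnreal_eq_real _ A, hA.1.cfc_eq]
  simp [IsHermitian.cfc, PosSemidef.sqrt, Function.comp_def, hA.eigenvalues_nonneg]

lemma sqrt_mul_self {A : Matrix n n 𝕜} (hA : A.PosSemidef) : hA.sqrt * hA.sqrt = A := by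
  rw [sqrt_eq_cfcSqrt]
  exact CFC.sqrt_mul_sqrt_self A hA.nonneg

lemma posSemidef_sqrt_sub_smul_one {A : Matrix n n ℂ} {c : ℝ} (hc : 0 ≤ c) (hA : A.PosSemidef)
    (h : (A - (c : ℂ) • 1).PosSemidef) : (hA.sqrt - (√c : ℂ) • 1).PosSemidef := by
  lift c to ℝ≥0 using hc
  have hle : algebraMap ℝ≥0 (Matrix n n ℂ) c ≤ A := by
    rwa [le_iff, algebraMap_nnreal_eq_smul_one]
  have := CFC.sqrt_le_sqrt _ _ hle
  rwa [CFC.sqrt_algebraMap, le_iff, algebraMap_nnreal_eq_smul_one, Real.coe_sqrt,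
    ← sqrt_eq_cfcSqrt hA] at this

end PosSemidef

end Matrix

theorem sylvester_sqrt_specNorm_bound_general (s_min s_max : ℝ)
    (h0 : 0 < s_min) :
    ∃ κ : ℝ, 0 < κ ∧
      ∀ (L : ℕ), 1 ≤ L →
        ∀ (R : Matrix (Fin L) (Fin L) ℂ) (hR : R.PosSemidef),
          (R - (s_min : ℂ) • 1).PosSemidef →
          ((s_max : ℂ) • 1 - R).PosSemidef →
          ∀ A X : Matrix (Fin L) (Fin L) ℂ,
            R * X * hR.sqrt + hR.sqrt * X * R = A →
            specNorm X ≤ κ * specNorm A := by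
  refine ⟨1 / (2 * √s_min ^ 3), by positivity, fun L _ R hR hlow _ A X hAX ↦ ?_⟩
  set S := toEuclideanCLM (𝕜 := ℂ) hR.sqrt
  have hS : IsCoerciveWith S √s_min :=
    Matrix.isCoerciveWith_toEuclideanCLM (hR.posSemidef_sqrt_sub_smul_one h0.le hlow)
  have hR_eq : toEuclideanCLM (𝕜 := ℂ) R = S * S := by rw [← map_mul, hR.sqrt_mul_self]
  have hA : toEuclideanCLM (𝕜 := ℂ) A =
      S * S * toEuclideanCLM (𝕜 := ℂ) X * S + S * toEuclideanCLM (𝕜 := ℂ) X * (S * S) := by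
    rw [← hAX, map_add, map_mul, map_mul, map_mul, map_mul, hR_eq]
  have key := hS.two_mul_pow_three_mul_norm_le (Real.sqrt_pos.mpr h0) (toEuclideanCLM (𝕜 := ℂ) X)
  rw [← hA] at key
  unfold specNorm
  rw [div_mul_eq_mul_div, one_mul, le_div_iff₀' (by positivity)]
  exact key

/-- uniform spectral-norm bound for the operator `D_R`, the
unique solution of `R X R^{1/2} + R^{1/2} X R = A`, when `s_min I ≤ R ≤ s_max I`. -/
theorem sylvester_sqrt_specNorm_bound (s_min s_max : ℝ)
    (h0 : 0 < s_min) (h1 : s_min ≤ s_max) :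
    ∃ κ : ℝ, 0 < κ ∧
      ∀ (L : ℕ), 1 ≤ L →
        ∀ (R : Matrix (Fin L) (Fin L) ℂ) (hR : R.PosSemidef),
          (R - (s_min : ℂ) • 1).PosSemidef →
          ((s_max : ℂ) • 1 - R).PosSemidef →
          ∀ A X : Matrix (Fin L) (Fin L) ℂ,
            R * X * hR.sqrt + hR.sqrt * X * R = A →
            specNorm X ≤ κ * specNorm A :=
  sylvester_sqrt_specNorm_bound_general s_min s_max h0
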